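/- arXiv:0804.1597 — 4 statements merged into one kernel-verified Lean document; each statement's English description precedes it below -/
import Mathlib

section
/- Let S be a shift-invariant subspace of L²(ℝ). Then either S is invariant under all real translations, or there exists a maximum positive integer n such that S is invariant under translations by (1/n)ℤ. -/
/-! If the set `A` of positive integers `m` for which `S` is `(1/m)ℤ`-invariant is bounded,
its maximum is the required `n`. Otherwise the points `j / m` with `m ∈ A` are dense in `ℝ`;
since `a ↦ T_a f` is continuous and `S` is closed, the set of `a` with `T_a S ⊆ S` is closed,
so it contains all of `ℝ`. -/

open MeasureTheory

noncomputable section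

/-- The space `L²(ℝ)` of complex-valued square-integrable functions. -/
abbrev L2 := Lp ℂ 2 (volume : Measure ℝ)

/-- The translation operator `T_a f (x) = f (x - a)` on `L²(ℝ)`. -/
def Tr (a : ℝ) : L2 → L2 :=
  Lp.compMeasurePreserving (fun x => x - a) (measurePreserving_sub_right volume a)

lemma continuous_Tr (f : L2) : Continuous fun a : ℝ => Tr a f :=
  Continuous.compMeasurePreservingLp (f := fun _ : ℝ => f)
    (g := fun a : ℝ => ⟨fun x : ℝ => x - a, by fun_prop⟩) continuous_const
    (ContinuousMap.continuous_of_continuous_uncurry _ (continuous_snd.sub continuous_fst))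
    (fun a => measurePreserving_sub_right volume a) (by norm_num)

lemma isClosed_setOf_forall_Tr_mem {S : Set L2} (hS : IsClosed S) :
    IsClosed {a : ℝ | ∀ f ∈ S, Tr a f ∈ S} := by
  simp only [Set.ofPred_forall]
  exact isClosed_biInter fun f _ => hS.preimage (continuous_Tr f)

lemma dense_setOf_intCast_div_of_not_bddAbove {A : Set ℕ} (hA : ¬BddAbove A) :
    Dense {x : ℝ | ∃ m ∈ A, ∃ j : ℤ, (j : ℝ) / m = x} := by
  rw [Metric.dense_iff]
  intro x r hr
  obtain ⟨m, hmA, hm⟩ := not_bddAbove_iff.mp hA ⌈r⁻¹⌉₊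
  have hm_gt : r⁻¹ < m := (Nat.le_ceil _).trans_lt (by exact_mod_cast hm)
  have hm_pos : (0 : ℝ) < m := (inv_pos.mpr hr).trans hm_gt
  refine ⟨⌊x * m⌋ / m, ?_, m, hmA, ⌊x * m⌋, rfl⟩
  have hfloor_le : (⌊x * m⌋ : ℝ) / m ≤ x := (div_le_iff₀ hm_pos).mpr (Int.floor_le _)
  have hfloor_gt : x - (m : ℝ)⁻¹ < (⌊x * m⌋ : ℝ) / m := by
    rw [sub_lt_iff_lt_add, ← one_div, ← add_div, lt_div_iff₀ hm_pos]
    linarith [Int.lt_floor_add_one (x * m)]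
  have hinv_lt : (m : ℝ)⁻¹ < r := by
    simpa using inv_strictAnti₀ (inv_pos.mpr hr) hm_gt
  rw [Metric.mem_ball, Real.dist_eq, abs_sub_lt_iff]
  constructor <;> linarith

/-- If `S` is a shift-invariant subspace of `L²(ℝ)`, then either `S` is invariant under all
real translations, or there is a maximum positive integer `n` such that `S` is
`(1/n)ℤ`-invariant. -/
theorem stmt2 (S : Submodule ℂ L2) (hS : IsClosed (S : Set L2))
    (hinv : ∀ f ∈ S, ∀ k : ℤ, Tr (k : ℝ) f ∈ S) :
    (∀ θ : ℝ, ∀ f ∈ S, Tr θ f ∈ S) ∨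
    (∃ n : ℕ, 0 < n ∧ (∀ f ∈ S, ∀ j : ℤ, Tr ((j : ℝ) / n) f ∈ S) ∧
      ∀ m : ℕ, 0 < m → (∀ f ∈ S, ∀ j : ℤ, Tr ((j : ℝ) / m) f ∈ S) → m ≤ n) := by
  set A : Set ℕ := {m : ℕ | 0 < m ∧ ∀ f ∈ S, ∀ j : ℤ, Tr ((j : ℝ) / m) f ∈ S}
  have one_mem : 1 ∈ A := ⟨one_pos, by simpa using hinv⟩
  by_cases hbdd : BddAbove A
  · obtain ⟨hpos, hsup⟩ := Nat.sSup_mem ⟨1, one_mem⟩ hbdd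
    exact Or.inr ⟨sSup A, hpos, hsup, fun m hm hmS => le_csSup hbdd ⟨hm, hmS⟩⟩
  · have hsub : {x : ℝ | ∃ m ∈ A, ∃ j : ℤ, (j : ℝ) / m = x} ⊆
        {a : ℝ | ∀ f ∈ S, Tr a f ∈ S} := by
      rintro _ ⟨m, hm, j, rfl⟩ f hf
      exact hm.2 f hf j
    exact Or.inl fun θ =>
      (isClosed_setOf_forall_Tr_mem hS).closure_subset_iff.mpr hsub
        (dense_setOf_intCast_div_of_not_bddAbove hbdd θ)
end
end

section
/- If S is a shift-invariant subspace of L²(ℝ) that is invariant under translation by some irrational number θ, then S is invariant under every real translation. -/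
/-!
The translations leaving `S` invariant form an additive submonoid `M` of `ℝ`, closed because
`y ↦ T_y f` is continuous. It contains `ℤ` and `θ`, so every element `mθ + n` of the group
`ℤθ + ℤ`, which is dense as `θ` is irrational, lies in `M` up to sign. Hence `M` contains
arbitrarily small nonzero elements `δ`, and the points `kδ + c` (`k ∈ ℕ`, `c ∈ ℤ`) of `M` are
`|δ|`-dense in `ℝ`; so `M = ℝ`.
-/

open MeasureTheory

noncomputable section

theorem Tr_zero (f : L2) : Tr 0 f = f := by
  simp only [Tr, sub_zero]
  exact Lp.compMeasurePreserving_id_apply f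

theorem Tr_add (a b : ℝ) (f : L2) : Tr (a + b) f = Tr a (Tr b f) := by
  have hcomp : (fun x : ℝ => x - (a + b)) = (fun x => x - b) ∘ (fun x => x - a) := by
    funext x
    simp only [Function.comp, sub_sub]
  simp only [Tr, ← Lp.compMeasurePreserving_comp_apply]
  congr 2

theorem continuous_Tr_apply (f : L2) : Continuous fun y : ℝ => Tr y f :=
  Continuous.compMeasurePreservingLp (g := fun y : ℝ => (⟨fun x => x - y, by fun_prop⟩ : C(ℝ, ℝ)))
    continuous_const
    (ContinuousMap.continuous_of_continuous_uncurry _ (by dsimp [Function.uncurry]; fun_prop))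
    _ (by norm_num)

def invariantTranslations (S : Set L2) : AddSubmonoid ℝ where
  carrier := {y | ∀ f ∈ S, Tr y f ∈ S}
  zero_mem' f hf := by rwa [Tr_zero]
  add_mem' ha hb f hf := by
    rw [Tr_add]
    exact ha _ (hb f hf)

theorem isClosed_invariantTranslations {S : Set L2} (hS : IsClosed S) :
    IsClosed (invariantTranslations S : Set ℝ) := by
  have : (invariantTranslations S : Set ℝ) = ⋂ f ∈ S, (fun y => Tr y f) ⁻¹' S := by
    ext y
    simp [invariantTranslations, Set.mem_iInter]
  rw [this]
  exact isClosed_biInter fun f _ => hS.preimage (continuous_Tr_apply f)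

theorem AddSubmonoid.mem_or_neg_mem_of_mem_closure_pair {G : Type*} [AddCommGroup G]
    (M : AddSubmonoid G) {a b g : G} (ha : a ∈ M) (hb : b ∈ M) (hb' : -b ∈ M)
    (hg : g ∈ AddSubgroup.closure {a, b}) : g ∈ M ∨ -g ∈ M := by
  have hzsmul_b : ∀ n : ℤ, n • b ∈ M := fun n => by
    obtain ⟨j, rfl | rfl⟩ := Int.eq_nat_or_neg n
    · simpa using M.nsmul_mem hb j
    · simpa using M.nsmul_mem hb' j
  obtain ⟨m, n, rfl⟩ := AddSubgroup.mem_closure_pair.1 hg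
  obtain ⟨k, rfl | rfl⟩ := Int.eq_nat_or_neg m
  · left
    exact M.add_mem (by simpa using M.nsmul_mem ha k) (hzsmul_b n)
  · right
    rw [neg_add, neg_zsmul, neg_neg, ← neg_zsmul]
    exact M.add_mem (by simpa using M.nsmul_mem ha k) (hzsmul_b (-n))

theorem exists_nsmul_add_intCast_near {δ : ℝ} (hδ : δ ≠ 0) (y : ℝ) :
    ∃ k : ℕ, ∃ c : ℤ, |y - (k • δ + c)| < |δ| := by
  obtain ⟨c, hc⟩ : ∃ c : ℤ, 0 ≤ (y - c) / δ := by
    rcases hδ.lt_or_gt with h | h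
    · exact ⟨⌈y⌉, div_nonneg_of_nonpos (by linarith [Int.le_ceil y]) h.le⟩
    · exact ⟨⌊y⌋, div_nonneg (by linarith [Int.floor_le y]) h.le⟩
  set r := (y - c) / δ
  refine ⟨⌊r⌋₊, c, ?_⟩
  have hy : y - (⌊r⌋₊ • δ + c) = (r - ⌊r⌋₊) * δ := by
    simp only [r, nsmul_eq_mul]
    field_simp
    ring
  have hfrac : |r - ⌊r⌋₊| < 1 := by
    rw [abs_lt]
    constructor <;> linarith [Nat.floor_le hc, Nat.lt_floor_add_one r]
  rw [hy, abs_mul]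
  exact mul_lt_of_lt_one_left (abs_pos.2 hδ) hfrac

theorem AddSubmonoid.dense_of_intCast_mem_of_exists_small (M : AddSubmonoid ℝ)
    (hℤ : ∀ m : ℤ, (m : ℝ) ∈ M) (hsmall : ∀ ε > 0, ∃ δ ∈ M, δ ≠ 0 ∧ |δ| < ε) :
    Dense (M : Set ℝ) := by
  rw [Metric.dense_iff]
  intro y ε hε
  obtain ⟨δ, hδM, hδ0, hδε⟩ := hsmall ε hε
  obtain ⟨k, c, hkc⟩ := exists_nsmul_add_intCast_near hδ0 y
  refine ⟨k • δ + c, ?_, M.add_mem (M.nsmul_mem hδM k) (hℤ c)⟩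
  rw [Metric.mem_ball, Real.dist_eq, abs_sub_comm]
  exact hkc.trans hδε

theorem AddSubmonoid.dense_of_intCast_mem_of_irrational_mem (M : AddSubmonoid ℝ)
    (hℤ : ∀ m : ℤ, (m : ℝ) ∈ M) {θ : ℝ} (hθ : Irrational θ) (hθM : θ ∈ M) :
    Dense (M : Set ℝ) := by
  refine M.dense_of_intCast_mem_of_exists_small hℤ fun ε hε => ?_
  have hG : Dense (AddSubgroup.closure {θ, 1} : Set ℝ) :=
    dense_addSubgroupClosure_pair_iff.2 (by rwa [div_one])
  obtain ⟨g, ⟨hg0, hgε⟩, hgG⟩ := hG.inter_open_nonempty _ isOpen_Ioo (Set.nonempty_Ioo.2 hε)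
  have h1 : (1 : ℝ) ∈ M := by exact_mod_cast hℤ 1
  have hneg1 : (-1 : ℝ) ∈ M := by exact_mod_cast hℤ (-1)
  rcases M.mem_or_neg_mem_of_mem_closure_pair hθM h1 hneg1 hgG with hg | hg
  · exact ⟨g, hg, hg0.ne', by rwa [abs_of_pos hg0]⟩
  · exact ⟨-g, hg, neg_ne_zero.2 hg0.ne', by rwa [abs_neg, abs_of_pos hg0]⟩

/-- If a shift-invariant subspace `S` of `L²(ℝ)` is invariant under translation by an
irrational number `θ`, then `S` is invariant under every real translation. -/
theorem stmt3 (S : Submodule ℂ L2) (hS : IsClosed (S : Set L2))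
    (hinv : ∀ f ∈ S, ∀ k : ℤ, Tr (k : ℝ) f ∈ S)
    (θ : ℝ) (hθ : Irrational θ) (hθinv : ∀ f ∈ S, Tr θ f ∈ S) :
    ∀ y : ℝ, ∀ f ∈ S, Tr y f ∈ S := by
  have hdense : Dense (invariantTranslations S : Set ℝ) :=
    (invariantTranslations S).dense_of_intCast_mem_of_irrational_mem
      (fun m f hf => hinv f hf m) hθ hθinv
  exact fun y => (isClosed_invariantTranslations hS).closure_subset (hdense y)
end
end

section
/- Let f ∈ L²(ℝ), n a positive integer, and S(f, (1/n)ℤ) the closed span of {T_{j/n} f : j ∈ ℤ}. If m is an nℤ-periodic measurable function with m·f̂ ∈ L²(ℝ), then the function g with ĝ = m·f̂ belongs to S(f, (1/n)ℤ). -/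
/-!
Translation by `a` becomes multiplication by the character `ω ↦ 𝐞 (-(a ω))` on the Fourier side,
so the Fourier transforms of the finite combinations of the `T_{j/n} f` are the products `P · f̂`
with `P` a trigonometric polynomial of period `n`. The `n`-periodic multiplier `m` descends to a
function `M` on the circle `ℝ / nℤ`, and `‖(M - P) · f̂‖_{L²(ℝ)}` is the `L²` norm of `M - P` for
the finite measure `μ` obtained by pushing `|f̂|² dω` forward to the circle. As `m · f̂ ∈ L²`, we get
`M ∈ L²(μ)`; trigonometric polynomials are uniformly dense in the continuous functions, which are
dense in `L²(μ)`, so `g` is an `L²` limit of combinations of the `T_{j/n} f`.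
-/

open MeasureTheory FourierTransform

noncomputable section

/-- `F` is the Fourier–Plancherel transform on `L²(ℝ)`: a unitary that agrees with the
classical Fourier integral `f̂(ω) = ∫ f(x) e^{-2πiωx} dx` on integrable functions. -/
def IsFourierTransform (F : L2 ≃ₗᵢ[ℂ] L2) : Prop :=
  ∀ f : L2, Integrable (f : ℝ → ℂ) volume → (F f : ℝ → ℂ) =ᵐ[volume] 𝓕 (f : ℝ → ℂ)

/-- The shift-invariant space generated by `f`: the closed span of integer translates. -/
def SIS (f : L2) : Set L2 :=
  closure (Submodule.span ℂ {g : L2 | ∃ j : ℤ, g = Tr (j : ℝ) f} : Set L2)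

/-- The `(1/n)ℤ` shift-invariant space generated by `f`: closed span of `{T_{j/n} f}`. -/
def SISn (f : L2) (n : ℕ) : Set L2 :=
  closure (Submodule.span ℂ {g : L2 | ∃ j : ℤ, g = Tr ((j : ℝ) / n) f} : Set L2)

open Set Submodule
open scoped ENNReal InnerProductSpace

namespace MeasureTheory

variable {α 𝕜 : Type*} [MeasurableSpace α] [RCLike 𝕜] {μ : Measure α} {p : ℝ≥0∞}

theorem Lp.dense_setOf_integrable {E : Type*} [NormedAddCommGroup E] [Fact (1 ≤ p)]
    (hp : p ≠ ∞) : Dense {u : Lp E p μ | Integrable u μ} :=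
  (Lp.simpleFunc.dense hp).mono fun u hu =>
    let v : Lp.simpleFunc E p μ := ⟨u, hu⟩
    ((SimpleFunc.memLp_iff_integrable (one_pos.trans_le Fact.out).ne' hp).1
      (Lp.simpleFunc.memLp v)).congr (Lp.simpleFunc.toSimpleFunc_eq_toFun v)

theorem eLpNorm_mul_of_norm_eq_one {u : α → 𝕜} (hu : ∀ x, ‖u x‖ = 1) (g : α → 𝕜) :
    eLpNorm (fun x => u x * g x) p μ = eLpNorm g p μ :=
  eLpNorm_congr_norm_ae <| .of_forall fun x => by rw [norm_mul, hu, one_mul]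

theorem eLpNorm_mul_eq_eLpNorm_withDensity (hp0 : p ≠ 0) (hp : p ≠ ∞) {φ : α → 𝕜}
    (hφ : AEStronglyMeasurable φ μ) (h : α → 𝕜) :
    eLpNorm (fun x => h x * φ x) p μ =
      eLpNorm h p (μ.withDensity fun x => ‖φ x‖ₑ ^ p.toReal) := by
  simp only [eLpNorm_eq_lintegral_rpow_enorm_toReal hp0 hp]
  rw [lintegral_withDensity_eq_lintegral_mul_non_measurable₀ _
    (hφ.enorm.pow_const _) (.of_forall fun x => by finiteness)]
  simp only [Pi.mul_apply, enorm_mul, ENNReal.mul_rpow_of_nonneg _ _ ENNReal.toReal_nonneg,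
    mul_comm]

theorem MemLp.isFiniteMeasure_withDensity_enorm_rpow {φ : α → 𝕜} (hφ : MemLp φ p μ)
    (hp0 : p ≠ 0) (hp : p ≠ ∞) : IsFiniteMeasure (μ.withDensity fun x => ‖φ x‖ₑ ^ p.toReal) :=
  isFiniteMeasure_withDensity
    (lintegral_rpow_enorm_lt_top_of_eLpNorm_lt_top hp0 hp hφ.eLpNorm_lt_top).ne

theorem eLpNorm_comp_mul_eq_eLpNorm_map_withDensity {β : Type*} [MeasurableSpace β]
    (hp0 : p ≠ 0) (hp : p ≠ ∞) {φ : α → 𝕜}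
    (hφ : AEStronglyMeasurable φ μ) {π : α → β} (hπ : Measurable π) {Q : β → 𝕜}
    (hQ : Measurable Q) :
    eLpNorm (fun x => Q (π x) * φ x) p μ =
      eLpNorm Q p ((μ.withDensity fun x => ‖φ x‖ₑ ^ p.toReal).map π) := by
  rw [eLpNorm_map_measure hQ.aestronglyMeasurable hπ.aemeasurable,
    eLpNorm_mul_eq_eLpNorm_withDensity hp0 hp hφ]
  rfl

namespace Lp

def mulUnimodular (u : α → 𝕜) (hu : Measurable u) (hu1 : ∀ x, ‖u x‖ = 1)
    (g : Lp 𝕜 p μ) : Lp 𝕜 p μ :=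
  MemLp.toLp (fun x => u x * g x)
    ⟨hu.aestronglyMeasurable.mul (Lp.aestronglyMeasurable g),
      by rw [eLpNorm_mul_of_norm_eq_one hu1]; exact Lp.eLpNorm_lt_top g⟩

variable {u : α → 𝕜} (hu : Measurable u) (hu1 : ∀ x, ‖u x‖ = 1)

theorem coeFn_mulUnimodular (g : Lp 𝕜 p μ) :
    mulUnimodular u hu hu1 g =ᵐ[μ] fun x => u x * g x :=
  MemLp.coeFn_toLp _

theorem isometry_mulUnimodular [Fact (1 ≤ p)] :
    Isometry (mulUnimodular (μ := μ) (p := p) u hu hu1) := by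
  refine Isometry.of_dist_eq fun g₁ g₂ => ?_
  rw [Lp.dist_def, Lp.dist_def, ← eLpNorm_mul_of_norm_eq_one hu1 (⇑g₁ - ⇑g₂)]
  congr 1
  refine eLpNorm_congr_ae ?_
  filter_upwards [coeFn_mulUnimodular hu hu1 g₁, coeFn_mulUnimodular hu hu1 g₂] with x h₁ h₂
  simp only [Pi.sub_apply, h₁, h₂, mul_sub]

end Lp

end MeasureTheory

theorem AddCircle.exists_mem_span_fourier_eLpNorm_sub_lt {T : ℝ} [Fact (0 < T)]
    (μ : Measure (AddCircle T)) [IsFiniteMeasure μ] {p : ℝ≥0∞} [Fact (1 ≤ p)] (hp : p ≠ ∞)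
    {Q : AddCircle T → ℂ} (hQ : MemLp Q p μ) {ε : ℝ≥0∞} (hε : 0 < ε) :
    ∃ P ∈ span ℂ (range (_root_.fourier (T := T))), eLpNorm (Q - ⇑P) p μ < ε := by
  have hdense := (ContinuousMap.toLp_denseRange ℂ μ ℂ hp).topologicalClosure_map_submodule
    span_fourier_closure_eq_top
  have hQ_mem : hQ.toLp ∈ closure (((span ℂ (range _root_.fourier)).map
      (ContinuousMap.toLp (E := ℂ) p μ ℂ : C(AddCircle T, ℂ) →ₗ[ℂ] Lp ℂ p μ) :
        Submodule ℂ (Lp ℂ p μ)) : Set (Lp ℂ p μ)) := by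
    rw [← Submodule.topologicalClosure_coe, hdense]; trivial
  obtain ⟨_, ⟨P, hP, rfl⟩, hdist⟩ := EMetric.mem_closure_iff.1 hQ_mem ε hε
  refine ⟨P, hP, ?_⟩
  rwa [Lp.edist_def, eLpNorm_congr_ae] at hdist
  filter_upwards [hQ.coeFn_toLp, ContinuousMap.coeFn_toLp (𝕜 := ℂ) (p := p) μ P]
    with x h₁ h₂
  rw [Pi.sub_apply, Pi.sub_apply, h₁, ← h₂]
  rfl

theorem Real.fourier_comp_sub_right {V E : Type*} [NormedAddCommGroup V] [InnerProductSpace ℝ V]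
    [MeasurableSpace V] [BorelSpace V] [FiniteDimensional ℝ V] [NormedAddCommGroup E]
    [NormedSpace ℂ E] (f : V → E) (a : V) :
    𝓕 (f ∘ fun v => v - a) = fun w => 𝐞 (-⟪a, w⟫_ℝ) • 𝓕 f w := by
  simp_rw [sub_eq_add_neg]
  exact (VectorFourier.fourierIntegral_comp_add_right 𝐞 volume (innerₗ V) f (-a)).trans
    (by simp; rfl)

namespace IsFourierTransform

variable {F : L2 ≃ₗᵢ[ℂ] L2}

theorem coeFn_translate (hF : IsFourierTransform F) (a : ℝ) (f : L2) :
    F (Tr a f) =ᵐ[volume] fun ω => 𝐞 (-(a * ω)) * F f ω := by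
  have hu : Measurable fun ω : ℝ => (𝐞 (-(a * ω)) : ℂ) := by fun_prop
  have hu1 (ω : ℝ) : ‖(𝐞 (-(a * ω)) : ℂ)‖ = 1 := Circle.norm_coe _
  suffices F (Tr a f) = Lp.mulUnimodular _ hu hu1 (F f) from
    this ▸ Lp.coeFn_mulUnimodular hu hu1 _
  refine congrFun (Continuous.ext_on (Lp.dense_setOf_integrable (p := 2) ENNReal.ofNat_ne_top)
    (F.continuous.comp (Lp.isometry_compMeasurePreserving _).continuous)
    ((Lp.isometry_mulUnimodular hu hu1).continuous.comp F.continuous) fun u hu_int => ?_) f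
  have h_tr : ⇑(Tr a u) =ᵐ[volume] u ∘ fun x => x - a := Lp.coeFn_compMeasurePreserving u _
  have h_tr_int : Integrable (Tr a u) volume :=
    (((measurePreserving_sub_right volume a).integrable_comp
      (Lp.aestronglyMeasurable u)).2 hu_int).congr h_tr.symm
  refine Lp.ext ?_
  calc ⇑(F (Tr a u)) =ᵐ[volume] 𝓕 ⇑(Tr a u) := hF _ h_tr_int
    _ = 𝓕 (u ∘ fun x => x - a) := funext (Real.fourier_congr_ae h_tr)
    _ = fun ω => 𝐞 (-(a * ω)) * 𝓕 ⇑u ω := by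
      rw [Real.fourier_comp_sub_right]; simp [Circle.smul_def, mul_comm]
    _ =ᵐ[volume] fun ω => 𝐞 (-(a * ω)) * F u ω := by
      filter_upwards [hF u hu_int] with ω h; rw [h]
    _ =ᵐ[volume] ⇑(Lp.mulUnimodular _ hu hu1 (F u)) := (Lp.coeFn_mulUnimodular hu hu1 _).symm

theorem exists_mem_span_translate_coeFn_eq_mul (hF : IsFourierTransform F) (f : L2) {T : ℝ}
    {P : C(AddCircle T, ℂ)} (hP : P ∈ span ℂ (range _root_.fourier)) :
    ∃ v ∈ span ℂ {g : L2 | ∃ j : ℤ, g = Tr ((j : ℝ) / T) f},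
      F v =ᵐ[volume] fun ω => P ω * F f ω := by
  induction hP using Submodule.span_induction with
  | mem _ hP =>
    obtain ⟨j, rfl⟩ := hP
    -- `fourier j` is `ω ↦ 𝐞 (j ω / T)`, the phase produced by translating by `-j / T`.
    refine ⟨Tr (((-j : ℤ) : ℝ) / T) f, subset_span ⟨-j, rfl⟩, ?_⟩
    filter_upwards [hF.coeFn_translate (((-j : ℤ) : ℝ) / T) f] with ω h
    rw [h, fourier_coe_apply, Real.fourierChar_apply]
    congr 2
    push_cast
    ring
  | zero =>
    refine ⟨0, zero_mem _, ?_⟩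
    filter_upwards [Lp.coeFn_zero ℂ 2 (volume : Measure ℝ)] with ω h
    rw [map_zero, h]
    simp
  | add P₁ P₂ _ _ h₁ h₂ =>
    obtain ⟨v₁, hv₁, hF₁⟩ := h₁
    obtain ⟨v₂, hv₂, hF₂⟩ := h₂
    refine ⟨v₁ + v₂, add_mem hv₁ hv₂, ?_⟩
    filter_upwards [hF₁, hF₂, Lp.coeFn_add (F v₁) (F v₂)] with ω h₁ h₂ h
    rw [map_add, h, Pi.add_apply, h₁, h₂, ContinuousMap.add_apply, add_mul]
  | smul c P _ h =>
    obtain ⟨v, hv, hFv⟩ := h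
    refine ⟨c • v, smul_mem _ c hv, ?_⟩
    filter_upwards [hFv, Lp.coeFn_smul c (F v)] with ω h₁ h
    rw [map_smul, h, Pi.smul_apply, h₁, ContinuousMap.smul_apply, smul_eq_mul, smul_eq_mul,
      mul_assoc]

end IsFourierTransform

/-- If `m` is `nℤ`-periodic measurable with `m · f̂ ∈ L²`, then the function `g` with
`ĝ = m · f̂` belongs to `S(f, (1/n)ℤ)`. -/
theorem stmt7 (F : L2 ≃ₗᵢ[ℂ] L2) (hF : IsFourierTransform F)
    (f : L2) (n : ℕ) (hn : 0 < n) (m : ℝ → ℂ) (hm : Measurable m)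
    (hper : ∀ ω : ℝ, ∀ k : ℤ, m (ω + n * k) = m ω)
    (hL2 : MemLp (fun ω => m ω * (F f : ℝ → ℂ) ω) 2 volume)
    (g : L2) (hgdef : (F g : ℝ → ℂ) =ᵐ[volume] fun ω => m ω * (F f : ℝ → ℂ) ω) :
    g ∈ SISn f n := by
  have : Fact (0 < (n : ℝ)) := ⟨Nat.cast_pos.2 hn⟩
  set μ : Measure (AddCircle (n : ℝ)) :=
    (volume.withDensity fun ω => ‖F f ω‖ₑ ^ (2 : ℝ≥0∞).toReal).map (↑)
  have := (Lp.memLp (F f)).isFiniteMeasure_withDensity_enorm_rpow two_ne_zero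
    ENNReal.ofNat_ne_top
  have h_norm {Q : AddCircle (n : ℝ) → ℂ} (hQ : Measurable Q) :
      eLpNorm Q 2 μ = eLpNorm (fun ω : ℝ => Q ω * F f ω) 2 volume :=
    (eLpNorm_comp_mul_eq_eLpNorm_map_withDensity two_ne_zero ENNReal.ofNat_ne_top
      (Lp.aestronglyMeasurable _) AddCircle.measurable_mk' hQ).symm
  have hm_per : m.Periodic n := fun ω => by simpa using hper ω 1
  have hM : Measurable hm_per.lift := measurable_from_quotient.2 hm
  have hM_L2 : MemLp hm_per.lift 2 μ := ⟨hM.aestronglyMeasurable, h_norm hM ▸ hL2.2⟩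
  refine EMetric.mem_closure_iff.2 fun ε hε => ?_
  obtain ⟨P, hP, hMP⟩ :=
    AddCircle.exists_mem_span_fourier_eLpNorm_sub_lt μ ENNReal.ofNat_ne_top hM_L2 hε
  obtain ⟨v, hv, hFv⟩ := hF.exists_mem_span_translate_coeFn_eq_mul f hP
  refine ⟨v, hv, ?_⟩
  calc edist g v = eLpNorm (⇑(F g) - ⇑(F v)) 2 volume := by rw [← F.edist_map, Lp.edist_def]
    _ = eLpNorm (fun ω : ℝ => (hm_per.lift - ⇑P) ω * F f ω) 2 volume := by
      refine eLpNorm_congr_ae ?_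
      filter_upwards [hgdef, hFv] with ω h₁ h₂
      rw [Pi.sub_apply, h₁, h₂, Pi.sub_apply, sub_mul]
      rfl
    _ = eLpNorm (hm_per.lift - ⇑P) 2 μ := (h_norm (hM.sub P.continuous.measurable)).symm
    _ < ε := hMP
end
end

section
/- Fix a positive integer n and for k = 0,…,n−1 set B_k = ⋃_{j∈ℤ} ([k, k+1) + nj). Let S be a shift-invariant subspace of L²(ℝ) and U_k = {f ∈ L²(ℝ) : f̂ = ĝ·χ_{B_k} for some g ∈ S}. If U_k ⊆ S, then U_k is a closed subspace of L²(ℝ) that is invariant under translations by (1/n)ℤ (and in particular under ℤ). -/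
open MeasureTheory FourierTransform

noncomputable section

/-- `B_k = ⋃_{j ∈ ℤ} ([k, k+1) + n j)`. -/
def Bset (n k : ℕ) : Set ℝ := {ω : ℝ | ∃ j : ℤ, ω - n * j ∈ Set.Ico (k : ℝ) ((k : ℝ) + 1)}

/-- `U_k = {f ∈ L² : f̂ = ĝ · χ_{B_k} for some g ∈ S}`. -/
def Uspace (F : L2 ≃ₗᵢ[ℂ] L2) (S : Set L2) (n k : ℕ) : Set L2 :=
  {f : L2 | ∃ g ∈ S, (F f : ℝ → ℂ) =ᵐ[volume] (Bset n k).indicator (F g : ℝ → ℂ)}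

/-!
Write `Ĝ = F(S)`. Integer translations act on the Fourier side as multiplication by the
characters `e^{2πijω}`, so `Ĝ` is stable under multiplication by trigonometric polynomials, hence
(Stone–Weierstrass, `Ĝ` closed) by continuous 1-periodic functions, and by dominated convergence by
bounded a.e. limits of those, such as `ψ ∘ fract` for continuous `ψ`. If `n a ∈ ℤ`, the modulation
`e^{-2πiaω}` implementing `T_a` agrees on `B_k` with the 1-periodic function
`e^{-2πia(k + fract ω)}`; as `f̂` vanishes off `B_k` for `f ∈ U_k`, the transform of `T_a f` lies in
`Ĝ` and vanishes off `B_k`. Closedness and linearity come from `U_k = S ∩ F⁻¹{h : h = 0 off B_k}`,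
valid once `U_k ⊆ S`.
-/

open Filter Topology
open scoped ENNReal

section SupportedIn

variable {α E : Type*} [MeasurableSpace α] {μ : Measure α} {p : ℝ≥0∞} [Fact (1 ≤ p)]
  [NormedAddCommGroup E] (𝕜 : Type*) [NormedField 𝕜] [NormedSpace 𝕜 E]

def MeasureTheory.Lp.supportedIn (s : Set α) : Submodule 𝕜 (Lp E p μ) :=
  (LpToLpRestrictCLM α E 𝕜 μ p sᶜ : Lp E p μ →ₗ[𝕜] Lp E p (μ.restrict sᶜ)).ker

lemma MeasureTheory.Lp.isClosed_supportedIn (s : Set α) :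
    IsClosed ((Lp.supportedIn 𝕜 s : Submodule 𝕜 (Lp E p μ)) : Set (Lp E p μ)) :=
  ContinuousLinearMap.isClosed_ker _

lemma MeasureTheory.Lp.mem_supportedIn_iff {s : Set α} (hs : MeasurableSet s) {f : Lp E p μ} :
    f ∈ Lp.supportedIn 𝕜 s ↔ (f : α → E) =ᵐ[μ] s.indicator f := by
  rw [Lp.supportedIn, LinearMap.mem_ker, ContinuousLinearMap.coe_coe, Lp.eq_zero_iff_ae_eq_zero]
  have hf := LpToLpRestrictCLM_coeFn 𝕜 sᶜ f
  constructor
  · intro h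
    have h' := (ae_restrict_iff' hs.compl).1 (hf.symm.trans h)
    filter_upwards [h'] with x hx
    by_cases hxs : x ∈ s
    · rw [Set.indicator_of_mem hxs]
    · rw [Set.indicator_of_notMem hxs, hx hxs]; rfl
  · intro h
    refine hf.trans ((ae_restrict_iff' hs.compl).2 ?_)
    filter_upwards [h] with x hx hxs
    rw [hx, Set.indicator_of_notMem hxs]; rfl

end SupportedIn

lemma tendsto_eLpNorm_of_dominated {α E : Type*} [MeasurableSpace α] {μ : Measure α}
    [NormedAddCommGroup E] {p : ℝ≥0∞} (hp : p ≠ ∞) {u : ℕ → α → E} {b : α → ℝ}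
    (hu : ∀ m, AEStronglyMeasurable (u m) μ) (hb : MemLp b p μ)
    (hbound : ∀ m, ∀ᵐ x ∂μ, ‖u m x‖ ≤ b x)
    (hlim : ∀ᵐ x ∂μ, Tendsto (fun m => u m x) atTop (𝓝 0)) :
    Tendsto (fun m => eLpNorm (u m) p μ) atTop (𝓝 0) := by
  rcases eq_or_ne p 0 with rfl | hp0
  · simpa only [eLpNorm_exponent_zero] using tendsto_const_nhds
  have hpr : 0 < p.toReal := ENNReal.toReal_pos hp0 hp
  have hpow : Tendsto (fun t : ℝ≥0∞ => t ^ p.toReal) (𝓝 0) (𝓝 0) := by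
    simpa [hpr] using (ENNReal.continuous_rpow_const (y := p.toReal)).tendsto 0
  have hroot : Tendsto (fun t : ℝ≥0∞ => t ^ (1 / p.toReal)) (𝓝 0) (𝓝 0) := by
    simpa [hpr] using (ENNReal.continuous_rpow_const (y := 1 / p.toReal)).tendsto 0
  have hfin : ∫⁻ x, ‖b x‖ₑ ^ p.toReal ∂μ ≠ ∞ :=
    (lintegral_rpow_enorm_lt_top_of_eLpNorm_lt_top hp0 hp hb.2).ne
  have hint := tendsto_lintegral_of_dominated_convergence' (fun x => ‖b x‖ₑ ^ p.toReal)
    (fun m => (hu m).enorm.pow_const p.toReal)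
    (fun m => (hbound m).mono fun x hx => ENNReal.rpow_le_rpow
      (enorm_le_iff_norm_le.2 (hx.trans (Real.le_norm_self _))) hpr.le) hfin
    (hlim.mono fun x hx => hpow.comp (by simpa using hx.enorm))
  rw [lintegral_zero] at hint
  simp only [eLpNorm_eq_lintegral_rpow_enorm_toReal hp0 hp]
  exact hroot.comp hint

lemma MeasureTheory.Lp.dense_setOf_integrable_s8 {α E : Type*} [MeasurableSpace α] {μ : Measure α}
    [NormedAddCommGroup E] {p : ℝ≥0∞} [Fact (1 ≤ p)] (hp : p ≠ ∞) :
    Dense {f : Lp E p μ | Integrable f μ} := by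
  refine (Lp.simpleFunc.dense hp).mono fun f hf => ?_
  let f' : Lp.simpleFunc E p μ := ⟨f, hf⟩
  have hp0 : p ≠ 0 := (lt_of_lt_of_le zero_lt_one (Fact.out : 1 ≤ p)).ne'
  exact ((SimpleFunc.memLp_iff_integrable hp0 hp).1 (Lp.simpleFunc.memLp f')).congr
    (Lp.simpleFunc.toSimpleFunc_eq_toFun f')

def trapezoid (m : ℕ) (t : ℝ) : ℝ := min 1 (min ((m + 1) * t) ((m + 1) * (1 - t)))

lemma continuous_trapezoid (m : ℕ) : Continuous (trapezoid m) := by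
  unfold trapezoid; fun_prop

lemma trapezoid_zero (m : ℕ) : trapezoid m 0 = 0 := by simp [trapezoid]; positivity

lemma trapezoid_one (m : ℕ) : trapezoid m 1 = 0 := by simp [trapezoid]; positivity

lemma abs_trapezoid_le_one (m : ℕ) {t : ℝ} (ht : t ∈ Set.Icc 0 1) : |trapezoid m t| ≤ 1 := by
  have : 0 ≤ trapezoid m t :=
    le_min zero_le_one (le_min (by nlinarith [ht.1]) (by nlinarith [ht.2]))
  rw [abs_of_nonneg this]
  exact min_le_left _ _

lemma eventually_trapezoid_eq_one {t : ℝ} (ht : t ∈ Set.Ioo 0 1) :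
    ∀ᶠ m in atTop, trapezoid m t = 1 := by
  have hgrow : ∀ s : ℝ, 0 < s → ∀ᶠ m : ℕ in atTop, 1 ≤ ((m : ℝ) + 1) * s := fun s hs =>
    ((tendsto_natCast_atTop_atTop.atTop_add tendsto_const_nhds).atTop_mul_const hs
      ).eventually_ge_atTop 1
  filter_upwards [hgrow t ht.1, hgrow (1 - t) (sub_pos.2 ht.2)] with m h₀ h₁
  exact min_eq_left (le_min h₀ h₁)

section MulStable

variable {α : Type*} [MeasurableSpace α] {μ : Measure α} {p : ℝ≥0∞}

def MulStable (G : Set (Lp ℂ p μ)) (w : α → ℂ) : Prop :=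
  ∀ h ∈ G, ∃ g ∈ G, (g : α → ℂ) =ᵐ[μ] fun x => w x * h x

def mulStabilizer (G : Submodule ℂ (Lp ℂ p μ)) : Submodule ℂ (α → ℂ) where
  carrier := {w | MulStable (G : Set (Lp ℂ p μ)) w}
  zero_mem' h _ := ⟨0, G.zero_mem, by
    filter_upwards [Lp.coeFn_zero ℂ p μ] with x hx
    rw [hx, Pi.zero_apply, zero_mul]⟩
  add_mem' {v w} hv hw h hh := by
    obtain ⟨g₁, hg₁, e₁⟩ := hv h hh
    obtain ⟨g₂, hg₂, e₂⟩ := hw h hh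
    refine ⟨g₁ + g₂, G.add_mem hg₁ hg₂, ?_⟩
    filter_upwards [Lp.coeFn_add g₁ g₂, e₁, e₂] with x hx h₁ h₂
    rw [hx, Pi.add_apply, h₁, h₂, Pi.add_apply, add_mul]
  smul_mem' c w hw h hh := by
    obtain ⟨g, hg, e⟩ := hw h hh
    refine ⟨c • g, G.smul_mem c hg, ?_⟩
    filter_upwards [Lp.coeFn_smul c g, e] with x hx h₁
    rw [hx, Pi.smul_apply, h₁, Pi.smul_apply, smul_eq_mul, smul_eq_mul, mul_assoc]

variable [Fact (1 ≤ p)]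

theorem MulStable.of_tendsto (hp : p ≠ ∞) {G : Set (Lp ℂ p μ)} (hG : IsClosed G)
    {w : ℕ → α → ℂ} {v : α → ℂ} {C : ℝ} (hw : ∀ m, MulStable G (w m))
    (hmeas : ∀ m, AEStronglyMeasurable (w m) μ) (hbound : ∀ m x, ‖w m x‖ ≤ C)
    (hlim : ∀ᵐ x ∂μ, Tendsto (fun m => w m x) atTop (𝓝 (v x))) : MulStable G v := by
  intro h hh
  choose g hgG hg using fun m => hw m h hh
  have hvmeas : AEStronglyMeasurable v μ := aestronglyMeasurable_of_tendsto_ae atTop hmeas hlim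
  have hvbound : ∀ᵐ x ∂μ, ‖v x‖ ≤ C :=
    hlim.mono fun x hx => le_of_tendsto' hx.norm fun m => hbound m x
  have hvh : MemLp (fun x => v x * h x) p μ :=
    (Lp.memLp h).of_le_mul (hvmeas.mul (Lp.aestronglyMeasurable h))
      (hvbound.mono fun x hx => by rw [norm_mul]; gcongr)
  refine ⟨hvh.toLp _, hG.mem_of_tendsto (Lp.tendsto_Lp_of_tendsto_eLpNorm _ hvh ?_)
    (Eventually.of_forall (f := atTop) hgG), hvh.coeFn_toLp⟩
  have hdiff : ∀ m, eLpNorm (⇑(g m) - fun x => v x * h x) p μ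
      = eLpNorm (fun x => (w m x - v x) * h x) p μ := fun m =>
    eLpNorm_congr_ae ((hg m).mono fun x hx => by simp [hx, sub_mul])
  simp_rw [hdiff]
  refine tendsto_eLpNorm_of_dominated hp (b := fun x => (C + C) * ‖h x‖)
    (fun m => ((hmeas m).sub hvmeas).mul (Lp.aestronglyMeasurable h))
    ((Lp.memLp h).norm.const_mul _) (fun m => hvbound.mono fun x hx => ?_) ?_
  · rw [norm_mul]
    gcongr
    exact (norm_sub_le _ _).trans (add_le_add (hbound m x) hx)
  · filter_upwards [hlim] with x hx
    simpa using (hx.sub_const (v x)).mul_const (h x)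

theorem MulStable.of_continuous {T : ℝ} [Fact (0 < T)] (hp : p ≠ ∞)
    {G : Submodule ℂ (Lp ℂ p μ)} (hG : IsClosed (G : Set (Lp ℂ p μ)))
    {π : α → AddCircle T} (hπ : Measurable π)
    (hchar : ∀ j : ℤ, MulStable (G : Set (Lp ℂ p μ)) fun x => fourier j (π x))
    (P : C(AddCircle T, ℂ)) : MulStable (G : Set (Lp ℂ p μ)) fun x => P (π x) := by
  let L : C(AddCircle T, ℂ) →ₗ[ℂ] α → ℂ :=
    (LinearMap.funLeft ℂ ℂ π).comp (ContinuousMap.coeFnLinearMap ℂ)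
  have hspan : Submodule.span ℂ (Set.range fourier) ≤ (mulStabilizer G).comap L :=
    Submodule.span_le.2 (by rintro _ ⟨j, rfl⟩; exact hchar j)
  have hP : P ∈ closure
      (Submodule.span ℂ (Set.range (fourier (T := T))) : Set C(AddCircle T, ℂ)) := by
    rw [← Submodule.topologicalClosure_coe, span_fourier_closure_eq_top]; trivial
  obtain ⟨Q, hQ, hlim⟩ := mem_closure_iff_seq_limit.1 hP
  obtain ⟨C, hC⟩ := isBounded_iff_forall_norm_le.1 (Metric.isBounded_range_of_tendsto Q hlim)
  exact MulStable.of_tendsto hp hG (w := fun m x => Q m (π x)) (C := C) (fun m => hspan (hQ m))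
    (fun m => ((Q m).continuous.measurable.comp hπ).aestronglyMeasurable)
    (fun m x => ((Q m).norm_coe_le_norm (π x)).trans (hC _ ⟨m, rfl⟩))
    (Eventually.of_forall fun x => ((continuous_eval_const (π x)).tendsto P).comp hlim)

end MulStable

theorem MulStable.comp_fract {μ : Measure ℝ} [NullSingletonClass μ] {p : ℝ≥0∞} [Fact (1 ≤ p)]
    (hp : p ≠ ∞) {G : Submodule ℂ (Lp ℂ p μ)} (hG : IsClosed (G : Set (Lp ℂ p μ)))
    (hchar : ∀ j : ℤ, MulStable (G : Set (Lp ℂ p μ)) fun x : ℝ => fourier j (x : AddCircle (1 : ℝ)))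
    {ψ : ℝ → ℂ} (hψ : Continuous ψ) : MulStable (G : Set (Lp ℂ p μ)) fun x => ψ (Int.fract x) := by
  -- `ψ ∘ fract` jumps at the integers; the cutoffs vanish there, so `trapezoid m * ψ` descends
  -- to a continuous function on the circle, and it agrees with `ψ` on `Ioo 0 1` for large `m`.
  let g : ℕ → ℝ → ℂ := fun m t => trapezoid m t * ψ t
  have hg : ∀ m, Continuous (g m) := fun m =>
    (Complex.continuous_ofReal.comp (continuous_trapezoid m)).mul hψ
  have hg01 : ∀ m, g m 0 = g m 1 := fun m => by simp [g, trapezoid_zero, trapezoid_one]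
  let P : ℕ → C(AddCircle (1 : ℝ), ℂ) := fun m =>
    ⟨AddCircle.liftIco 1 0 (g m), AddCircle.liftIco_zero_continuous (hg01 m) (hg m).continuousOn⟩
  have hP : ∀ m (x : ℝ), P m x = g m (Int.fract x) := fun m x => by
    rw [← AddCircle.coe_fract x]
    exact AddCircle.liftIco_zero_coe_apply (f := g m) ⟨Int.fract_nonneg x, Int.fract_lt_one x⟩
  obtain ⟨C, hC⟩ :=
    (isCompact_Icc (a := (0 : ℝ)) (b := 1)).exists_bound_of_continuousOn hψ.continuousOn
  have hnull : μ (Set.range ((↑) : ℤ → ℝ)) = 0 := (Set.countable_range _).measure_zero μ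
  refine MulStable.of_tendsto hp hG (w := fun m x => P m x) (C := C)
    (fun m => MulStable.of_continuous hp hG (AddCircle.continuous_mk' 1).measurable hchar (P m))
    (fun m => ((P m).continuous.comp (AddCircle.continuous_mk' 1)).aestronglyMeasurable)
    (fun m x => ?_) ?_
  · have hx : Int.fract x ∈ Set.Icc (0 : ℝ) 1 := ⟨Int.fract_nonneg x, (Int.fract_lt_one x).le⟩
    rw [hP, norm_mul, Complex.norm_real, Real.norm_eq_abs]
    simpa using mul_le_mul (abs_trapezoid_le_one m hx) (hC _ hx) (norm_nonneg _) zero_le_one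
  · filter_upwards [compl_mem_ae_iff.2 hnull] with x hx
    have hx' : Int.fract x ∈ Set.Ioo (0 : ℝ) 1 :=
      ⟨(Int.fract_nonneg x).lt_of_ne' (mt Int.fract_eq_zero_iff.1 hx), Int.fract_lt_one x⟩
    refine tendsto_const_nhds.congr' ?_
    filter_upwards [eventually_trapezoid_eq_one hx'] with m hm
    simp [hP, g, hm]

lemma fourierChar_intCast (z : ℤ) : 𝐞 (z : ℝ) = 1 := by
  rw [Real.fourierChar_apply', Circle.exp_two_pi_mul_int]

lemma fourier_coe_eq_fourierChar (j : ℤ) (x : ℝ) :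
    fourier j (x : AddCircle (1 : ℝ)) = 𝐞 (j * x) := by
  rw [fourier_coe_apply, Real.fourierChar_apply]
  push_cast
  ring_nf

lemma fourier_comp_sub_right (f : ℝ → ℂ) (a : ℝ) :
    𝓕 (fun x => f (x - a)) = fun ω => (𝐞 (-a * ω) : ℂ) * 𝓕 f ω := by
  have h := VectorFourier.fourierIntegral_comp_add_right 𝐞 volume (innerₗ ℝ) f (-a)
  simp only [Function.comp_def, ← sub_eq_add_neg] at h
  refine h.trans (funext fun ω => ?_)
  simp only [Circle.smul_def, innerₗ_apply_apply, RCLike.inner_apply, conj_trivial]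
  rw [mul_comm ω]
  rfl

lemma coeFn_Tr (a : ℝ) (f : L2) : (Tr a f : ℝ → ℂ) =ᵐ[volume] fun x => f (x - a) :=
  Lp.coeFn_compMeasurePreserving f (measurePreserving_sub_right volume a)

lemma continuous_Tr_s8 (a : ℝ) : Continuous (Tr a) :=
  (Lp.isometry_compMeasurePreserving (measurePreserving_sub_right volume a)).continuous

theorem IsFourierTransform.apply_Tr_ae_eq {F : L2 ≃ₗᵢ[ℂ] L2} (hF : IsFourierTransform F) (a : ℝ)
    (f : L2) : (F (Tr a f) : ℝ → ℂ) =ᵐ[volume] fun ω => (𝐞 (-a * ω) : ℂ) * F f ω := by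
  have he : MemLp (fun ω => (𝐞 (-a * ω) : ℂ)) ∞ volume :=
    memLp_top_of_bound (by fun_prop) 1 (ae_of_all _ fun ω => (Circle.norm_coe _).le)
  set c : Lp ℂ ∞ (volume : Measure ℝ) := he.toLp _
  let mulC : L2 →+ L2 := AddMonoidHom.mk' (fun g => c • g) (Lp.add_smul c)
  have hc : ∀ g : L2, (mulC g : ℝ → ℂ) =ᵐ[volume] fun ω => (𝐞 (-a * ω) : ℂ) * g ω := fun g => by
    filter_upwards [Lp.coeFn_lpSMul (r := 2) c g, he.coeFn_toLp] with ω h₁ h₂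
    rw [AddMonoidHom.mk'_apply, h₁, Pi.smul_apply', h₂, smul_eq_mul]
  suffices h : F ∘ Tr a = mulC ∘ F by
    rw [show F (Tr a f) = mulC (F f) from congrFun h f]
    exact hc (F f)
  refine Continuous.ext_on (Lp.dense_setOf_integrable_s8 (by norm_num))
    (F.continuous.comp (continuous_Tr_s8 a))
    ((AddMonoidHomClass.continuous_of_bound mulC _ (Lp.norm_smul_le c)).comp F.continuous)
    fun f hf => Lp.ext ?_
  have hTr : Integrable (Tr a f : ℝ → ℂ) volume := (hf.comp_sub_right a).congr (coeFn_Tr a f).symm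
  calc (F (Tr a f) : ℝ → ℂ) =ᵐ[volume] 𝓕 (Tr a f : ℝ → ℂ) := hF _ hTr
    _ = fun ω => (𝐞 (-a * ω) : ℂ) * 𝓕 (f : ℝ → ℂ) ω := by
      rw [← fourier_comp_sub_right]; exact funext (Real.fourier_congr_ae (coeFn_Tr a f))
    _ =ᵐ[volume] fun ω => (𝐞 (-a * ω) : ℂ) * F f ω := by
      filter_upwards [hF f hf] with ω hω; rw [hω]
    _ =ᵐ[volume] (mulC (F f) : ℝ → ℂ) := (hc (F f)).symm

theorem IsFourierTransform.mulStable_fourier {F : L2 ≃ₗᵢ[ℂ] L2} (hF : IsFourierTransform F)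
    {S : Submodule ℂ L2} (hinv : ∀ f ∈ S, ∀ j : ℤ, Tr (j : ℝ) f ∈ S) (j : ℤ) :
    MulStable (S.comap (F.symm : L2 →ₗ[ℂ] L2) : Set L2)
      fun x : ℝ => fourier j (x : AddCircle (1 : ℝ)) := by
  intro h hh
  refine ⟨F (Tr (-j : ℤ) (F.symm h)), by simpa using hinv _ hh (-j), ?_⟩
  filter_upwards [hF.apply_Tr_ae_eq (-j : ℤ) (F.symm h)] with x hx
  rw [hx, F.apply_symm_apply, fourier_coe_eq_fourierChar, Int.cast_neg, neg_neg]

lemma measurableSet_Bset (n k : ℕ) : MeasurableSet (Bset n k) := by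
  simp only [Bset, Set.ofPred_exists]
  exact MeasurableSet.iUnion fun j => measurableSet_Ico.preimage (measurable_id.sub_const _)

lemma fourierChar_eq_of_mem_Bset {n k : ℕ} {a : ℝ} {m : ℤ} (ham : a * n = m) {ω : ℝ}
    (hω : ω ∈ Bset n k) : 𝐞 (-a * ω) = 𝐞 (-a * (k + Int.fract ω)) := by
  obtain ⟨j, hj₀, hj₁⟩ := hω
  have hfract : Int.fract ω = ω - n * j - k :=
    Int.fract_eq_iff.2 ⟨by linarith, by linarith, n * j + k, by push_cast; ring⟩
  have hshift : -a * ω = -a * (k + Int.fract ω) + ((-(m * j) : ℤ) : ℝ) := by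
    rw [hfract]; push_cast; rw [← ham]; ring
  rw [hshift, AddChar.map_add_eq_mul, fourierChar_intCast, mul_one]

lemma Uspace_eq_of_subset {F : L2 ≃ₗᵢ[ℂ] L2} {S : Set L2} {n k : ℕ}
    (hsub : Uspace F S n k ⊆ S) :
    Uspace F S n k = S ∩ F ⁻¹' (Lp.supportedIn ℂ (Bset n k) : Submodule ℂ L2) := by
  ext f
  simp only [Set.mem_inter_iff, Set.mem_preimage, SetLike.mem_coe,
    Lp.mem_supportedIn_iff ℂ (measurableSet_Bset n k)]
  refine ⟨fun hf => ⟨hsub hf, ?_⟩, fun ⟨hfS, hfB⟩ => ⟨f, hfS, hfB⟩⟩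
  obtain ⟨g, -, hfg⟩ := hf
  filter_upwards [hfg, hfg.indicator (s := Bset n k)] with ω h₁ h₂
  rw [h₁, h₂, Set.indicator_indicator, Set.inter_self]

theorem Tr_mem_Uspace {F : L2 ≃ₗᵢ[ℂ] L2} (hF : IsFourierTransform F) {n k : ℕ}
    {S : Submodule ℂ L2} (hS : IsClosed (S : Set L2))
    (hinv : ∀ f ∈ S, ∀ j : ℤ, Tr (j : ℝ) f ∈ S)
    (hsub : Uspace F (S : Set L2) n k ⊆ (S : Set L2)) {a : ℝ} (ha : ∃ m : ℤ, a * n = m)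
    {f : L2} (hf : f ∈ Uspace F (S : Set L2) n k) : Tr a f ∈ Uspace F (S : Set L2) n k := by
  obtain ⟨m, ham⟩ := ha
  let G : Submodule ℂ L2 := S.comap (F.symm : L2 →ₗ[ℂ] L2)
  have hG : IsClosed (G : Set L2) := hS.preimage F.symm.continuous
  obtain ⟨g, hgG, hg⟩ := MulStable.comp_fract (by norm_num) hG (hF.mulStable_fourier hinv)
    (ψ := fun t => 𝐞 (-a * (k + t))) (by fun_prop) (F f) (by simpa [G] using hsub hf)
  rw [Uspace_eq_of_subset hsub] at hf ⊢
  obtain ⟨-, hfB⟩ := hf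
  rw [Set.mem_preimage, SetLike.mem_coe, Lp.mem_supportedIn_iff ℂ (measurableSet_Bset n k)] at hfB
  have hTr := hF.apply_Tr_ae_eq a f
  have hFTr : F (Tr a f) = g := by
    refine Lp.ext (hTr.trans (EventuallyEq.trans ?_ hg.symm))
    filter_upwards [hfB] with ω hω
    by_cases hB : ω ∈ Bset n k
    · rw [fourierChar_eq_of_mem_Bset ham hB]
    · rw [hω, Set.indicator_of_notMem hB, mul_zero, mul_zero]
  refine ⟨by simpa [G, ← hFTr] using hgG, ?_⟩
  change F (Tr a f) ∈ Lp.supportedIn ℂ (Bset n k)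
  rw [Lp.mem_supportedIn_iff ℂ (measurableSet_Bset n k)]
  filter_upwards [hTr, hfB] with ω h₁ h₂
  by_cases hB : ω ∈ Bset n k
  · rw [Set.indicator_of_mem hB]
  · rw [Set.indicator_of_notMem hB, h₁, h₂, Set.indicator_of_notMem hB, mul_zero]

theorem stmt8_general (F : L2 ≃ₗᵢ[ℂ] L2) (hF : IsFourierTransform F)
    (n : ℕ) (k : ℕ)
    (S : Submodule ℂ L2) (hS : IsClosed (S : Set L2))
    (hinv : ∀ f ∈ S, ∀ j : ℤ, Tr (j : ℝ) f ∈ S)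
    (hsub : Uspace F (S : Set L2) n k ⊆ (S : Set L2)) :
    IsClosed (Uspace F (S : Set L2) n k) ∧
    (∃ U : Submodule ℂ L2, (U : Set L2) = Uspace F (S : Set L2) n k) ∧
    (∀ f ∈ Uspace F (S : Set L2) n k, ∀ j : ℤ,
        Tr ((j : ℝ) / n) f ∈ Uspace F (S : Set L2) n k) ∧
    (∀ f ∈ Uspace F (S : Set L2) n k, ∀ j : ℤ,
        Tr (j : ℝ) f ∈ Uspace F (S : Set L2) n k) := by
  have hU := Uspace_eq_of_subset hsub
  refine ⟨?_, ⟨S ⊓ (Lp.supportedIn ℂ (Bset n k)).comap (F : L2 →ₗ[ℂ] L2), hU.symm⟩,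
    fun f hf j => Tr_mem_Uspace hF hS hinv hsub ?_ hf,
    fun f hf j => Tr_mem_Uspace hF hS hinv hsub ⟨j * n, by push_cast; ring⟩ hf⟩
  · rw [hU]
    exact hS.inter ((Lp.isClosed_supportedIn ℂ _).preimage F.continuous)
  · rcases eq_or_ne n 0 with rfl | hn
    · exact ⟨0, by simp⟩
    · exact ⟨j, div_mul_cancel₀ _ (Nat.cast_ne_zero.2 hn)⟩

/-- If `S` is a SIS and `U_k ⊆ S`, then `U_k` is a closed subspace of `L²(ℝ)` invariant
under translations by `(1/n)ℤ`, in particular under `ℤ`. -/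
theorem stmt8 (F : L2 ≃ₗᵢ[ℂ] L2) (hF : IsFourierTransform F)
    (n : ℕ) (hn : 0 < n) (k : ℕ) (hk : k < n)
    (S : Submodule ℂ L2) (hS : IsClosed (S : Set L2))
    (hinv : ∀ f ∈ S, ∀ j : ℤ, Tr (j : ℝ) f ∈ S)
    (hsub : Uspace F (S : Set L2) n k ⊆ (S : Set L2)) :
    IsClosed (Uspace F (S : Set L2) n k) ∧
    (∃ U : Submodule ℂ L2, (U : Set L2) = Uspace F (S : Set L2) n k) ∧
    (∀ f ∈ Uspace F (S : Set L2) n k, ∀ j : ℤ,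
        Tr ((j : ℝ) / n) f ∈ Uspace F (S : Set L2) n k) ∧
    (∀ f ∈ Uspace F (S : Set L2) n k, ∀ j : ℤ,
        Tr (j : ℝ) f ∈ Uspace F (S : Set L2) n k) :=
  stmt8_general F hF n k S hS hinv hsub
end
end
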